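/- With P = U⁻¹ P_SM V⁻¹, C = V C_SM U, U, V invertible, and I + C P, I + P C, I + C_SM P_SM, I + P_SM C_SM all invertible, the 2×2 block internal-stability matrix [[(I+CP)⁻¹, −C(I+PC)⁻¹],[P(I+CP)⁻¹, −(I+PC)⁻¹]] equals [[V(I+C_SM P_SM)⁻¹V⁻¹, −V C_SM (I+P_SM C_SM)⁻¹ U],[U⁻¹ P_SM (I+C_SM P_SM)⁻¹ V⁻¹, −U⁻¹ (I+P_SM C_SM)⁻¹ U]]. -/

import Mathlib

/-! The loop gains are conjugates, `C * P = V * (CSM * PSM) * V⁻¹` and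
`P * C = U⁻¹ * (PSM * CSM) * U`, and `X ↦ (1 + X)⁻¹` commutes with conjugation. The off-diagonal
blocks then follow by cancelling `U * U⁻¹` and `V⁻¹ * V`. -/

namespace Matrix

variable {n K : Type*} [Fintype n] [DecidableEq n] [CommRing K]

theorem one_add_conj (A : Matrix n n K) {V : Matrix n n K} (hV : IsUnit V.det) :
    1 + V * A * V⁻¹ = V * (1 + A) * V⁻¹ := by
  rw [mul_add, add_mul, mul_one, mul_nonsing_inv V hV]

theorem inv_conj (A : Matrix n n K) {V : Matrix n n K} (hV : IsUnit V.det) :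
    (V * A * V⁻¹)⁻¹ = V * A⁻¹ * V⁻¹ := by
  rw [mul_inv_rev, mul_inv_rev, nonsing_inv_nonsing_inv V hV, mul_assoc]

theorem inv_one_add_conj (A : Matrix n n K) {V : Matrix n n K} (hV : IsUnit V.det) :
    (1 + V * A * V⁻¹)⁻¹ = V * (1 + A)⁻¹ * V⁻¹ := by
  rw [one_add_conj A hV, inv_conj _ hV]

theorem inv_one_add_conj_inv (A : Matrix n n K) {V : Matrix n n K} (hV : IsUnit V.det) :
    (1 + V⁻¹ * A * V)⁻¹ = V⁻¹ * (1 + A)⁻¹ * V := by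
  simpa only [nonsing_inv_nonsing_inv V hV] using inv_one_add_conj A (isUnit_nonsing_inv_det V hV)

end Matrix

theorem internal_stability_matrix_transformation_general {n : ℕ} {K : Type*} [Field K]
    (P C PSM CSM U V : Matrix (Fin n) (Fin n) K)
    (hU : IsUnit U.det) (hV : IsUnit V.det)
    (hP : P = U⁻¹ * PSM * V⁻¹) (hC : C = V * CSM * U) :
    Matrix.fromBlocks
      ((1 + C * P)⁻¹) (-(C * (1 + P * C)⁻¹))
      (P * (1 + C * P)⁻¹) (-((1 + P * C)⁻¹)) =
    Matrix.fromBlocks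
      (V * (1 + CSM * PSM)⁻¹ * V⁻¹) (-(V * CSM * (1 + PSM * CSM)⁻¹ * U))
      (U⁻¹ * PSM * (1 + CSM * PSM)⁻¹ * V⁻¹) (-(U⁻¹ * (1 + PSM * CSM)⁻¹ * U)) := by
  have hCP : C * P = V * (CSM * PSM) * V⁻¹ := by
    simp only [hC, hP, mul_assoc, Matrix.mul_nonsing_inv_cancel_left U _ hU]
  have hPC : P * C = U⁻¹ * (PSM * CSM) * U := by
    simp only [hC, hP, mul_assoc, Matrix.nonsing_inv_mul_cancel_left V _ hV]
  rw [hCP, hPC, Matrix.inv_one_add_conj _ hV, Matrix.inv_one_add_conj_inv _ hU, hC, hP]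
  simp only [mul_assoc, Matrix.mul_nonsing_inv_cancel_left U _ hU,
    Matrix.nonsing_inv_mul_cancel_left V _ hV]

/-- Transformation of the 2×2 block internal-stability test matrix. -/
theorem internal_stability_matrix_transformation {n : ℕ} {K : Type*} [Field K]
    (P C PSM CSM U V : Matrix (Fin n) (Fin n) K)
    (hU : IsUnit U.det) (hV : IsUnit V.det)
    (hP : P = U⁻¹ * PSM * V⁻¹) (hC : C = V * CSM * U)
    (h1 : IsUnit (1 + C * P).det) (h2 : IsUnit (1 + P * C).det)
    (h3 : IsUnit (1 + CSM * PSM).det) (h4 : IsUnit (1 + PSM * CSM).det) :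
    Matrix.fromBlocks
      ((1 + C * P)⁻¹) (-(C * (1 + P * C)⁻¹))
      (P * (1 + C * P)⁻¹) (-((1 + P * C)⁻¹)) =
    Matrix.fromBlocks
      (V * (1 + CSM * PSM)⁻¹ * V⁻¹) (-(V * CSM * (1 + PSM * CSM)⁻¹ * U))
      (U⁻¹ * PSM * (1 + CSM * PSM)⁻¹ * V⁻¹) (-(U⁻¹ * (1 + PSM * CSM)⁻¹ * U)) :=
  internal_stability_matrix_transformation_general P C PSM CSM U V hU hV hP hC
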